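/- Let B = (V, L, M) be a bichain and f an endomorphism of B that is not injective. Then the preimage of some element under f is a common interval of L and M with at least two elements; hence if B is prime, f is constant. -/

import Mathlib

/-- `I` is an interval of the (linear) order `r`. -/
def IsIntervalOf {V : Type*} (r : V → V → Prop) (I : Set V) : Prop :=
  ∀ x y z, x ∈ I → y ∈ I → r x z → r z y → z ∈ I

/-- The bichain `(V, L, M)` is prime: its only common intervals are trivial. -/
def BichainPrime {V : Type*} (L M : V → V → Prop) : Prop :=
  ∀ I : Set V, IsIntervalOf L I → IsIntervalOf M I →
    I = ∅ ∨ I = Set.univ ∨ ∃ a, I = {a}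

/-- If `f` is a non-injective endomorphism of the bichain `(V, L, M)`, then the
preimage of some element under `f` is a common interval of `L` and `M` with at least
two elements; hence if the bichain is prime, `f` is constant. -/
theorem noninjective_endo_of_bichain {V : Type*} (L M : V → V → Prop)
    (hL : IsLinearOrder V L) (hM : IsLinearOrder V M) (f : V → V)
    (hfL : ∀ x y, L x y → L (f x) (f y)) (hfM : ∀ x y, M x y → M (f x) (f y))
    (hnotinj : ¬ Function.Injective f) :
    (∃ v : V, IsIntervalOf L (f ⁻¹' {v}) ∧ IsIntervalOf M (f ⁻¹' {v}) ∧
       ∃ a ∈ f ⁻¹' {v}, ∃ b ∈ f ⁻¹' {v}, a ≠ b) ∧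
    (BichainPrime L M → ∃ c, f = Function.const V c) := by
  simp only [Function.Injective, not_forall] at hnotinj
  obtain ⟨a, b, hab, hne⟩ := hnotinj
  set v := f a with hv
  have haI : a ∈ f ⁻¹' {v} := rfl
  have hbI : b ∈ f ⁻¹' {v} := hab.symm
  have hIL : IsIntervalOf L (f ⁻¹' {v}) := by
    intro x y z hx hy hxz hzy
    have h1 : L v (f z) := by
      have := hfL x z hxz
      rwa [show f x = v from hx] at this
    have h2 : L (f z) v := by
      have := hfL z y hzy
      rwa [show f y = v from hy] at this
    exact hL.toIsPartialOrder.toAntisymm.antisymm _ _ h2 h1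
  have hIM : IsIntervalOf M (f ⁻¹' {v}) := by
    intro x y z hx hy hxz hzy
    have h1 : M v (f z) := by
      have := hfM x z hxz
      rwa [show f x = v from hx] at this
    have h2 : M (f z) v := by
      have := hfM z y hzy
      rwa [show f y = v from hy] at this
    exact hM.toIsPartialOrder.toAntisymm.antisymm _ _ h2 h1
  refine ⟨⟨v, hIL, hIM, a, haI, b, hbI, hne⟩, ?_⟩
  intro hprime
  rcases hprime _ hIL hIM with h | h | ⟨c, h⟩
  · exact absurd (h ▸ haI) (Set.notMem_empty a)
  · refine ⟨v, funext fun x => ?_⟩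
    have : x ∈ f ⁻¹' {v} := h ▸ Set.mem_univ x
    exact this
  · have ha : a = c := by have := h ▸ haI; simpa using this
    have hb : b = c := by have := h ▸ hbI; simpa using this
    exact absurd (ha.trans hb.symm) hne
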